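/- arXiv:0704.0002 — 2 statements merged into one kernel-verified Lean document; each statement's English description precedes it below -/
import Mathlib

section
/- Let H be the underlying undirected graph of any reachable configuration of the (k,ℓ)-pebble game with colors. Then H is (k,ℓ)-sparse; moreover, if exactly ℓ pebbles remain on the vertices, then H is (k,ℓ)-tight. -/
open scoped Classical

namespace PebbleGame

/-- A configuration of the `(k,ℓ)`-pebble game with colors: a directed multigraph
whose edges are records `(tail, head, color)` (the color of an edge is the color of
the unique pebble lying on it), together with the multiset of colors of the pebbles
sitting on each vertex. -/
structure PGConfig (V : Type) (k : ℕ) where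
  edges : Multiset (V × V × Fin k)
  pebs : V → Multiset (Fin k)

variable {V : Type} [DecidableEq V] {k ℓ : ℕ}

/-- The configuration resulting from an add-edge move: a pebble of color `c` is picked
up from `v`, the directed edge `vw` is added and the pebble is placed on it. -/
def addEdgeCfg (H : PGConfig V k) (v w : V) (c : Fin k) : PGConfig V k :=
  ⟨(v, w, c) ::ₘ H.edges, Function.update H.pebs v ((H.pebs v).erase c)⟩

/-- The configuration resulting from a pebble-slide move along the edge `(v, w, c)`,
using a pebble of color `c'` on `w`: the edge `vw` is replaced by `wv`, the pebble of
color `c` that was on the edge goes to `v`, and the pebble of color `c'` from `w` is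
placed on the new edge `wv`. -/
def slideCfg (H : PGConfig V k) (v w : V) (c c' : Fin k) : PGConfig V k :=
  ⟨(w, v, c') ::ₘ H.edges.erase (v, w, c),
    Function.update (Function.update H.pebs w ((H.pebs w).erase c')) v
      (c ::ₘ Function.update H.pebs w ((H.pebs w).erase c') v)⟩

/-- A legal move of the `(k,ℓ)`-pebble game with colors. -/
inductive Step (k ℓ : ℕ) : PGConfig V k → PGConfig V k → Prop
  | add (H : PGConfig V k) (v w : V) (c : Fin k)
      (hpeb : ℓ + 1 ≤ ∑ u ∈ ({v, w} : Finset V), (H.pebs u).card)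
      (hc : c ∈ H.pebs v) :
      Step k ℓ H (addEdgeCfg H v w c)
  | slide (H : PGConfig V k) (v w : V) (c c' : Fin k)
      (he : (v, w, c) ∈ H.edges)
      (hc : c' ∈ H.pebs w) :
      Step k ℓ H (slideCfg H v w c c')

/-- The initial configuration: no edges, and one pebble of each of the `k` colors on
every vertex. -/
def initCfg (V : Type) [DecidableEq V] [Fintype V] (k : ℕ) : PGConfig V k :=
  ⟨0, fun _ => Finset.univ.val⟩

/-- A configuration is reachable if it arises from the initial configuration by a
finite sequence of legal moves. -/
def Reachable [Fintype V] (k ℓ : ℕ) (H : PGConfig V k) : Prop :=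
  Relation.ReflTransGen (Step k ℓ) (initCfg V k) H

/-- The underlying undirected multigraph (multiset of edges) of a configuration. -/
def undirected (H : PGConfig V k) : Multiset (Sym2 V) :=
  H.edges.map fun e => s(e.1, e.2.1)

/-- The (undirected) edges of a configuration carrying a pebble of color `c`. -/
def monoEdges (H : PGConfig V k) (c : Fin k) : Multiset (Sym2 V) :=
  (H.edges.filter fun e => e.2.2 = c).map fun e => s(e.1, e.2.1)

/-- The undirected edges of color `c` among a multiset `F` of directed colored
edges. -/
def monoOf (F : Multiset (V × V × Fin k)) (c : Fin k) : Multiset (Sym2 V) :=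
  (F.filter fun e => e.2.2 = c).map fun e => s(e.1, e.2.1)

/-- `G` (a multiset of undirected edges on the fixed finite vertex set `V`) is a
`(k,ℓ)`-pebble-game graph if it is the underlying undirected multigraph of some
reachable configuration. -/
def PebbleGameGraph [Fintype V] (k ℓ : ℕ) (E : Multiset (Sym2 V)) : Prop :=
  ∃ H : PGConfig V k, Reachable k ℓ H ∧ undirected H = E

/-- The edges of `E` spanned by the vertex set `S` (both endpoints in `S`). -/
def spanned (E : Multiset (Sym2 V)) (S : Finset V) : Multiset (Sym2 V) :=
  E.filter fun e => e ∈ S.sym2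

/-- A multigraph is `(k,ℓ)`-sparse if every nonempty set of `n'` vertices spans at
most `k n' - ℓ` edges. -/
def Sparse (k ℓ : ℕ) (E : Multiset (Sym2 V)) : Prop :=
  ∀ S : Finset V, S.Nonempty → (spanned E S).card ≤ k * S.card - ℓ

/-- A multigraph is `(k,ℓ)`-tight if it is `(k,ℓ)`-sparse with exactly `k|V| - ℓ`
edges. -/
def Tight [Fintype V] (k ℓ : ℕ) (E : Multiset (Sym2 V)) : Prop :=
  Sparse k ℓ E ∧ E.card = k * Fintype.card V - ℓ

/-- Connectivity (as undirected multigraphs) via the edges of `F`. -/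
def Conn (F : Multiset (Sym2 V)) : V → V → Prop :=
  Relation.ReflTransGen fun a b => s(a, b) ∈ F

/-- The connected components of the graph with vertex set `S` and edge multiset `F`
(whose edges are assumed to be spanned by `S`), as a finset of vertex sets. -/
noncomputable def components (S : Finset V) (F : Multiset (Sym2 V)) : Finset (Finset V) :=
  S.image fun v => S.filter fun u => Conn F v u

/-- The tree-pieces of the graph `(S, F)`: connected components that contain no cycle,
i.e. whose spanned edge count is exactly one less than their vertex count (an isolated
vertex is a tree-piece). -/
noncomputable def treePieces (S : Finset V) (F : Multiset (Sym2 V)) : Finset (Finset V) :=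
  (components S F).filter fun C => (spanned F C).card + 1 = C.card

/-- The number of tree-pieces of the graph `(S, F)`. -/
noncomputable def treePieceCount (S : Finset V) (F : Multiset (Sym2 V)) : ℕ :=
  (treePieces S F).card

/-- A multigraph contains a cycle iff some nonempty vertex set spans at least as many
edges as it has vertices. -/
def HasCycle (F : Multiset (Sym2 V)) : Prop :=
  ∃ S : Finset V, S.Nonempty ∧ S.card ≤ (spanned F S).card

/-- A spanning tree on the whole (finite) vertex set: connected with `|V| - 1` edges. -/
def IsSpanningTree [Fintype V] (T : Multiset (Sym2 V)) : Prop :=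
  (∀ u v : V, Conn T u v) ∧ T.card + 1 = Fintype.card V

/-- A spanning map-graph: the edges admit an orientation in which every vertex has
out-degree exactly one. -/
def IsSpanningMapGraph [Fintype V] (T : Multiset (Sym2 V)) : Prop :=
  ∃ M : Multiset (V × V), M.map (fun p => s(p.1, p.2)) = T ∧
    ∀ v : V, (M.filter fun p => p.1 = v).card = 1

/-- A `(k,ℓ)`-maps-and-trees decomposition: `ℓ` edge-disjoint spanning trees and
`k - ℓ` edge-disjoint spanning map-graphs whose union is `E`. -/
def MapsAndTrees [Fintype V] (k ℓ : ℕ) (E : Multiset (Sym2 V)) : Prop :=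
  ∃ (T : Fin ℓ → Multiset (Sym2 V)) (M : Fin (k - ℓ) → Multiset (Sym2 V)),
    ((∑ i, T i) + ∑ j, M j) = E ∧ (∀ i, IsSpanningTree (T i)) ∧
      ∀ j, IsSpanningMapGraph (M j)

/-- `(S, T)` is a (possibly single-vertex) tree: nonempty vertex set `S`, edges spanned
by `S`, connected on `S`, and `|T| + 1 = |S|`. -/
def IsTreeOn (S : Finset V) (T : Multiset (Sym2 V)) : Prop :=
  S.Nonempty ∧ (∀ e ∈ T, e ∈ S.sym2) ∧ (∀ u ∈ S, ∀ v ∈ S, Conn T u v) ∧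
    T.card + 1 = S.card

/-- An `ℓTk` decomposition of `E`: `ℓ` edge-disjoint (not necessarily spanning,
possibly single-vertex) trees `(S i, T i)` whose edges partition `E`, such that every
vertex belongs to exactly `k` of the trees. -/
def LTkDecomp (k ℓ : ℕ) (E : Multiset (Sym2 V)) (S : Fin ℓ → Finset V)
    (T : Fin ℓ → Multiset (Sym2 V)) : Prop :=
  (∑ i, T i) = E ∧ (∀ i, IsTreeOn (S i) (T i)) ∧
    ∀ v : V, (Finset.univ.filter fun i => v ∈ S i).card = k

/-- A proper `ℓTk`: an `ℓTk` decomposition such that every nonempty subgraph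
(vertex set `U`, together with a sub-multiset `F i` of each tree spanned by `U`)
contains at least `ℓ` tree-pieces, the tree-pieces being the connected components of
the intersections of the trees with the subgraph. -/
def ProperLTk (k ℓ : ℕ) (E : Multiset (Sym2 V)) : Prop :=
  ∃ (S : Fin ℓ → Finset V) (T : Fin ℓ → Multiset (Sym2 V)),
    LTkDecomp k ℓ E S T ∧
      ∀ U : Finset V, U.Nonempty →
        ∀ F : Fin ℓ → Multiset (Sym2 V),
          (∀ i, F i ≤ T i) → (∀ i, ∀ e ∈ F i, e ∈ U.sym2) →
            ℓ ≤ ∑ i, treePieceCount (U ∩ S i) (F i)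

/-- One pebble-slide move (as a relation between configurations). -/
def SlideRel (k : ℕ) (A B : PGConfig V k) : Prop :=
  ∃ (v w : V) (c c' : Fin k), (v, w, c) ∈ A.edges ∧ c' ∈ A.pebs w ∧
    B = slideCfg A v w c c'

/-- A canonical move of the `(k,ℓ)`-pebble game with colors: add-edge moves cover the
new edge with a color present on both endpoints if one exists, and otherwise with the
highest-numbered color present; pebble-slide moves never create a monochromatic
cycle. -/
inductive CanStep (k ℓ : ℕ) : PGConfig V k → PGConfig V k → Prop
  | add (H : PGConfig V k) (v w : V) (c : Fin k)
      (hpeb : ℓ + 1 ≤ ∑ u ∈ ({v, w} : Finset V), (H.pebs u).card)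
      (hc : c ∈ H.pebs v)
      (hcanon : c ∈ H.pebs w ∨
        ((∀ c' : Fin k, c' ∈ H.pebs v → c' ∉ H.pebs w) ∧
          ∀ c' : Fin k, (c' ∈ H.pebs v ∨ c' ∈ H.pebs w) → c' ≤ c)) :
      CanStep k ℓ H (addEdgeCfg H v w c)
  | slide (H : PGConfig V k) (v w : V) (c c' : Fin k)
      (he : (v, w, c) ∈ H.edges)
      (hc : c' ∈ H.pebs w)
      (hnocycle : ∀ i : Fin k,
        HasCycle (monoEdges (slideCfg H v w c c') i) → HasCycle (monoEdges H i)) :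
      CanStep k ℓ H (slideCfg H v w c c')

/-- The graph obtained from a configuration by replacing every pebble lying on a
vertex by a loop at that vertex. -/
def withLoops [Fintype V] (H : PGConfig V k) : Multiset (Sym2 V) :=
  undirected H + Finset.univ.val.bind fun v => Multiset.replicate (H.pebs v).card s(v, v)

end PebbleGame
open PebbleGame

/-! At every vertex the pebbles plus the out-degree always number `k`. Summing over a vertex
set `S`, the edges spanned by `S` plus the free pebbles of `S` (those on `S` or on edges leaving
`S`) number `k|S|`. An add-edge move inside `S` needs `ℓ + 1` pebbles on `S` and consumes one
free pebble; every other move leaves the free pebbles of `S` unchanged. So once `S` spans an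
edge it keeps at least `ℓ` free pebbles, i.e. it spans at most `k|S| - ℓ` edges. For `S = V` no
edge leaves `S`, which gives the edge count in the tight case. -/

namespace Finset

variable {ι : Type*} [DecidableEq ι]

theorem sum_update_add_ite {M : Type*} [AddCommMonoid M] (s : Finset ι) (f : ι → M) (i : ι)
    (b : M) :
    ∑ x ∈ s, Function.update f i b x + (if i ∈ s then f i else 0)
      = ∑ x ∈ s, f x + (if i ∈ s then b else 0) := by
  by_cases hi : i ∈ s
  · rw [sum_update_of_mem hi, sum_eq_add_sum_sdiff_singleton_of_mem hi f]
    simp only [hi, if_true]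
    abel
  · simp [sum_update_of_notMem hi, hi]

theorem sum_card_update_add_ite {α : Type*} (s : Finset ι) (f : ι → Multiset α) (i : ι)
    (m : Multiset α) :
    ∑ x ∈ s, (Function.update f i m x).card + (if i ∈ s then (f i).card else 0)
      = ∑ x ∈ s, (f x).card + (if i ∈ s then m.card else 0) := by
  simpa only [← Function.apply_update (fun _ => Multiset.card)] using
    sum_update_add_ite s (fun x => (f x).card) i m.card

end Finset

namespace PebbleGame

variable {V : Type} [DecidableEq V] {k ℓ : ℕ}

def spanCount (H : PGConfig V k) (S : Finset V) : ℕ :=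
  H.edges.countP fun e => e.1 ∈ S ∧ e.2.1 ∈ S

def outCount (H : PGConfig V k) (S : Finset V) : ℕ :=
  H.edges.countP fun e => e.1 ∈ S ∧ e.2.1 ∉ S

def pebbleCount (H : PGConfig V k) (S : Finset V) : ℕ :=
  ∑ v ∈ S, (H.pebs v).card

def freeCount (H : PGConfig V k) (S : Finset V) : ℕ :=
  pebbleCount H S + outCount H S

theorem card_spanned_undirected (H : PGConfig V k) (S : Finset V) :
    (spanned (undirected H) S).card = spanCount H S := by
  rw [spanned, undirected, Multiset.filter_map, Multiset.card_map, spanCount,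
    Multiset.countP_eq_card_filter]
  congr 1
  refine Multiset.filter_congr fun e _ => ?_
  simp

theorem spanCount_addEdgeCfg (H : PGConfig V k) (S : Finset V) (v w : V) (c : Fin k) :
    spanCount (addEdgeCfg H v w c) S = spanCount H S + if v ∈ S ∧ w ∈ S then 1 else 0 :=
  Multiset.countP_cons _ _ _

theorem pebbleCount_addEdgeCfg (H : PGConfig V k) (S : Finset V) {v : V} (w : V) {c : Fin k}
    (hc : c ∈ H.pebs v) :
    pebbleCount (addEdgeCfg H v w c) S + (if v ∈ S then 1 else 0) = pebbleCount H S := by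
  have h := Finset.sum_card_update_add_ite S H.pebs v ((H.pebs v).erase c)
  have hcard := Multiset.card_erase_add_one hc
  simp only [pebbleCount, addEdgeCfg]
  split_ifs at h ⊢ <;> omega

theorem outCount_addEdgeCfg (H : PGConfig V k) (S : Finset V) (v w : V) (c : Fin k) :
    outCount (addEdgeCfg H v w c) S = outCount H S + if v ∈ S ∧ w ∉ S then 1 else 0 :=
  Multiset.countP_cons _ _ _

theorem freeCount_addEdgeCfg (H : PGConfig V k) (S : Finset V) {v : V} (w : V) {c : Fin k}
    (hc : c ∈ H.pebs v) :
    freeCount (addEdgeCfg H v w c) S + (if v ∈ S ∧ w ∈ S then 1 else 0) = freeCount H S := by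
  have hpeb := pebbleCount_addEdgeCfg H S w hc
  have hout := outCount_addEdgeCfg H S v w c
  rw [freeCount, freeCount]
  by_cases hv : v ∈ S <;> by_cases hw : w ∈ S <;> simp [hv, hw] at hpeb hout ⊢ <;> omega

theorem spanCount_slideCfg (H : PGConfig V k) (S : Finset V) {v w : V} {c : Fin k}
    (he : (v, w, c) ∈ H.edges) (c' : Fin k) :
    spanCount (slideCfg H v w c c') S = spanCount H S := by
  rw [spanCount, spanCount, slideCfg, Multiset.countP_cons]
  conv_rhs => rw [← Multiset.cons_erase he, Multiset.countP_cons]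
  simp [and_comm]

theorem pebbleCount_slideCfg (H : PGConfig V k) (S : Finset V) (v : V) {w : V} (c : Fin k)
    {c' : Fin k} (hc : c' ∈ H.pebs w) :
    pebbleCount (slideCfg H v w c c') S + (if w ∈ S then 1 else 0)
      = pebbleCount H S + (if v ∈ S then 1 else 0) := by
  have hw := Finset.sum_card_update_add_ite S H.pebs w ((H.pebs w).erase c')
  have hv := Finset.sum_card_update_add_ite S (Function.update H.pebs w ((H.pebs w).erase c')) v
    (c ::ₘ Function.update H.pebs w ((H.pebs w).erase c') v)
  have hcard := Multiset.card_erase_add_one hc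
  rw [Multiset.card_cons] at hv
  simp only [pebbleCount, slideCfg]
  split_ifs at hv hw ⊢ <;> omega

theorem outCount_slideCfg (H : PGConfig V k) (S : Finset V) {v w : V} {c : Fin k}
    (he : (v, w, c) ∈ H.edges) (c' : Fin k) :
    outCount (slideCfg H v w c c') S + (if v ∈ S ∧ w ∉ S then 1 else 0)
      = outCount H S + (if w ∈ S ∧ v ∉ S then 1 else 0) := by
  rw [outCount, outCount, slideCfg, Multiset.countP_cons]
  conv_rhs => rw [← Multiset.cons_erase he, Multiset.countP_cons]
  dsimp only
  omega

theorem freeCount_slideCfg (H : PGConfig V k) (S : Finset V) {v w : V} {c c' : Fin k}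
    (he : (v, w, c) ∈ H.edges) (hc : c' ∈ H.pebs w) :
    freeCount (slideCfg H v w c c') S = freeCount H S := by
  have hpeb := pebbleCount_slideCfg H S v c hc
  have hout := outCount_slideCfg H S he c'
  rw [freeCount, freeCount]
  by_cases hv : v ∈ S <;> by_cases hw : w ∈ S <;> simp [hv, hw] at hpeb hout ⊢ <;> omega

def Balanced (k ℓ : ℕ) (H : PGConfig V k) : Prop :=
  ∀ S : Finset V, spanCount H S + freeCount H S = k * S.card ∧
    (spanCount H S ≠ 0 → ℓ ≤ freeCount H S)

theorem balanced_initCfg [Fintype V] : Balanced k ℓ (initCfg V k) := by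
  intro S
  have hspan : spanCount (initCfg V k) S = 0 := Multiset.countP_zero _
  have hout : outCount (initCfg V k) S = 0 := Multiset.countP_zero _
  have hpeb : pebbleCount (initCfg V k) S = k * S.card := by
    simp [pebbleCount, initCfg, mul_comm]
  simp [freeCount, hspan, hout, hpeb]

theorem Balanced.step {A B : PGConfig V k} (hA : Balanced k ℓ A) (hAB : Step k ℓ A B) :
    Balanced k ℓ B := by
  intro S
  obtain ⟨hsum, hfree⟩ := hA S
  cases hAB with
  | add v w c hpeb hc =>
    have hspan := spanCount_addEdgeCfg A S v w c
    have hfree' := freeCount_addEdgeCfg A S w hc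
    by_cases hvw : v ∈ S ∧ w ∈ S
    · have hpair : pebbleCount A {v, w} ≤ pebbleCount A S :=
        Finset.sum_le_sum_of_subset (by simpa [Finset.insert_subset_iff] using hvw)
      simp only [hvw, and_self, if_true] at hspan hfree'
      have : ℓ + 1 ≤ freeCount A S := hpeb.trans (hpair.trans (Nat.le_add_right _ _))
      omega
    · simp only [hvw, if_false, add_zero] at hspan hfree'
      rw [hspan, hfree']
      exact ⟨hsum, hfree⟩
  | slide v w c c' he hc =>
    rw [spanCount_slideCfg A S he, freeCount_slideCfg A S he hc]
    exact ⟨hsum, hfree⟩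

theorem Reachable.balanced [Fintype V] {H : PGConfig V k} (hH : Reachable k ℓ H) :
    Balanced k ℓ H := by
  induction hH with
  | refl => exact balanced_initCfg
  | tail _ hstep ih => exact ih.step hstep

theorem Balanced.spanCount_le {H : PGConfig V k} (hH : Balanced k ℓ H) (S : Finset V) :
    spanCount H S ≤ k * S.card - ℓ := by
  obtain ⟨hsum, hfree⟩ := hH S
  omega

theorem Balanced.sparse {H : PGConfig V k} (hH : Balanced k ℓ H) : Sparse k ℓ (undirected H) :=
  fun S _ => card_spanned_undirected H S ▸ hH.spanCount_le S

theorem Balanced.card_undirected_add_pebbles [Fintype V] {H : PGConfig V k}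
    (hH : Balanced k ℓ H) :
    (undirected H).card + ∑ v, (H.pebs v).card = k * Fintype.card V := by
  have hspan : spanCount H Finset.univ = (undirected H).card := by
    simp [spanCount, undirected]
  have hout : outCount H Finset.univ = 0 := by
    simp [outCount]
  have := (hH Finset.univ).1
  rw [freeCount, hspan, hout, pebbleCount] at this
  simpa using this

end PebbleGame

theorem pebbleGame_graphs_are_sparse_general {V : Type} [Fintype V] [DecidableEq V]
    (k ℓ : ℕ) (H : PGConfig V k)
    (hH : Reachable k ℓ H) :
    Sparse k ℓ (undirected H) ∧
      ((∑ v : V, (H.pebs v).card) = ℓ → Tight k ℓ (undirected H)) := by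
  have hbal := hH.balanced
  refine ⟨hbal.sparse, fun hpebbles => ⟨hbal.sparse, ?_⟩⟩
  have := hbal.card_undirected_add_pebbles
  omega

/-- the underlying undirected graph of any reachable configuration is
`(k,ℓ)`-sparse, and if exactly `ℓ` pebbles remain on the vertices it is
`(k,ℓ)`-tight. -/
theorem pebbleGame_graphs_are_sparse {V : Type} [Fintype V] [DecidableEq V]
    (k ℓ : ℕ) (hk : 1 ≤ k) (hℓ : ℓ ≤ 2 * k - 1) (H : PGConfig V k)
    (hH : Reachable k ℓ H) :
    Sparse k ℓ (undirected H) ∧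
      ((∑ v : V, (H.pebs v).card) = ℓ → Tight k ℓ (undirected H)) :=
  pebbleGame_graphs_are_sparse_general k ℓ H hH
end

section
/- (The ℓ+1 pebble condition.) Let H be a reachable configuration of the (k,ℓ)-pebble game with colors, and let v, w be vertices such that adding an edge between v and w keeps the underlying graph (k,ℓ)-sparse. If the total number of pebbles on {v,w} is less than ℓ+1, then there is a sequence of pebble-slide moves after which some pebble that was not on {v,w} is on v or on w, and no pebble originally on {v,w} has been removed from {v,w}. -/
/-! Let `R` be the set of vertices reachable from `{v, w}` along directed edges. Every edge
carries a pebble taken from its tail and `R` is closed under out-edges, so `k |R|` is at most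
the number of pebbles on `R` plus the number of edges spanned by `R`; sparsity of `H + vw`
bounds the latter by `k |R| - ℓ - 1`. Hence `R` holds at least `ℓ + 1` pebbles, one of them
on a vertex `u ∉ {v, w}`, and sliding pebbles back along a directed path from `{v, w}` to `u`
brings one more pebble to `{v, w}`. -/

open scoped Classical

open PebbleGame

namespace PebbleGame

section Reach

variable {α : Type*}

inductive ReachIn (r : α → α → Prop) (S : Set α) : ℕ → α → Prop
  | base {a : α} : a ∈ S → ReachIn r S 0 a
  | step {n : ℕ} {a b : α} : ReachIn r S n a → r a b → ReachIn r S (n + 1) b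

theorem ReachIn.exists_le_or_reachIn {r r' : α → α → Prop} {S : Set α} {n : ℕ} {b : α}
    (u : α) (hr : ∀ a b, r a b → b ≠ u → r' a b) (h : ReachIn r S n b) :
    (∃ m ≤ n, ReachIn r S m u) ∨ ReachIn r' S n b := by
  induction h with
  | base ha => exact Or.inr (.base ha)
  | @step n a b ha hab ih =>
    by_cases hb : b = u
    · subst hb
      exact Or.inl ⟨n + 1, le_rfl, .step ha hab⟩
    rcases ih with ⟨m, hm, hu⟩ | ha'
    · exact Or.inl ⟨m, by omega, hu⟩
    · exact Or.inr (.step ha' (hr a b hab hb))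

end Reach

def PGConfig.Arc {V : Type} {k : ℕ} (H : PGConfig V k) (a b : V) : Prop :=
  ∃ c : Fin k, (a, b, c) ∈ H.edges

section Config

variable {V : Type} [DecidableEq V] {k ℓ : ℕ}

def outdeg (H : PGConfig V k) (u : V) : ℕ :=
  H.edges.countP fun e => e.1 = u

theorem sum_outdeg (H : PGConfig V k) (R : Finset V) :
    ∑ u ∈ R, outdeg H u = H.edges.countP fun e => e.1 ∈ R := by
  unfold outdeg
  induction H.edges using Multiset.induction_on with
  | empty => simp
  | cons e F ih =>
    simp only [Multiset.countP_cons, Finset.sum_add_distrib, ih, Finset.sum_ite_eq]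

theorem outdeg_addEdgeCfg (H : PGConfig V k) (v w u : V) (c : Fin k) :
    outdeg (addEdgeCfg H v w c) u = outdeg H u + if v = u then 1 else 0 := by
  simp only [outdeg, addEdgeCfg, Multiset.countP_cons]

theorem card_pebs_addEdgeCfg {H : PGConfig V k} {v : V} {c : Fin k} (hc : c ∈ H.pebs v)
    (w u : V) :
    ((addEdgeCfg H v w c).pebs u).card + (if v = u then 1 else 0) = (H.pebs u).card := by
  by_cases h : v = u
  · subst h
    simp [addEdgeCfg, Multiset.card_erase_add_one hc]
  · simp [addEdgeCfg, Function.update_of_ne (Ne.symm h), h]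

theorem outdeg_slideCfg {H : PGConfig V k} {v w : V} {c : Fin k} (he : (v, w, c) ∈ H.edges)
    (c' : Fin k) (u : V) :
    outdeg (slideCfg H v w c c') u + (if v = u then 1 else 0)
      = outdeg H u + if w = u then 1 else 0 := by
  have h := congrArg (Multiset.countP fun e : V × V × Fin k => e.1 = u)
    (Multiset.cons_erase he)
  simp only [Multiset.countP_cons] at h
  simp only [outdeg, slideCfg, Multiset.countP_cons, ← h]
  omega

theorem slideCfg_pebs_of_ne (H : PGConfig V k) {v w u : V} (c c' : Fin k) (hv : u ≠ v)
    (hw : u ≠ w) : (slideCfg H v w c c').pebs u = H.pebs u := by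
  simp [slideCfg, Function.update_apply, hv, hw]

theorem slideCfg_pebs_tail (H : PGConfig V k) {v w : V} (c c' : Fin k) (h : v ≠ w) :
    (slideCfg H v w c c').pebs v = c ::ₘ H.pebs v := by
  simp [slideCfg, h]

theorem slideCfg_pebs_head (H : PGConfig V k) {v w : V} (c c' : Fin k) (h : v ≠ w) :
    (slideCfg H v w c c').pebs w = (H.pebs w).erase c' := by
  simp [slideCfg, Function.update_apply, Ne.symm h]

theorem slideCfg_pebs_loop (H : PGConfig V k) (v : V) (c c' : Fin k) :
    (slideCfg H v v c c').pebs v = c ::ₘ (H.pebs v).erase c' := by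
  simp [slideCfg]

theorem card_pebs_slideCfg {H : PGConfig V k} {w : V} {c' : Fin k} (hc : c' ∈ H.pebs w)
    (v : V) (c : Fin k) (u : V) :
    ((slideCfg H v w c c').pebs u).card + (if w = u then 1 else 0)
      = (H.pebs u).card + if v = u then 1 else 0 := by
  have hw := Multiset.card_erase_add_one hc
  by_cases hvu : v = u <;> by_cases hwu : w = u
  · subst hvu hwu
    simp [slideCfg_pebs_loop, hw]
  · subst hvu
    simp [slideCfg_pebs_tail _ _ _ (Ne.symm hwu), hwu]
  · subst hwu
    simp [slideCfg_pebs_head _ _ _ hvu, hvu, hw]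
  · simp [slideCfg_pebs_of_ne _ _ _ (Ne.symm hvu) (Ne.symm hwu), hvu, hwu]

theorem Step.card_pebs_add_outdeg {H H' : PGConfig V k} (h : Step k ℓ H H') (u : V) :
    (H'.pebs u).card + outdeg H' u = (H.pebs u).card + outdeg H u := by
  cases h with
  | add v w c _ hc =>
    have := card_pebs_addEdgeCfg hc w u
    rw [outdeg_addEdgeCfg]
    omega
  | slide v w c c' he hc =>
    have := card_pebs_slideCfg hc v c u
    have := outdeg_slideCfg he c' u
    omega

theorem card_pebs_add_outdeg [Fintype V] {H : PGConfig V k} (hH : Reachable k ℓ H) (u : V) :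
    (H.pebs u).card + outdeg H u = k := by
  induction hH with
  | refl => simp [initCfg, outdeg]
  | tail _ hstep ih => rw [hstep.card_pebs_add_outdeg, ih]

theorem spanned_cons_of_mem {E : Multiset (Sym2 V)} {S : Finset V} {e : Sym2 V}
    (he : e ∈ S.sym2) : spanned (e ::ₘ E) S = e ::ₘ spanned E S :=
  Multiset.filter_cons_of_pos _ he

theorem sum_card_pebs_add_countP [Fintype V] {H : PGConfig V k} (hH : Reachable k ℓ H)
    (R : Finset V) :
    ∑ u ∈ R, (H.pebs u).card + H.edges.countP (fun e => e.1 ∈ R) = k * R.card := by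
  rw [← sum_outdeg, ← Finset.sum_add_distrib, Finset.sum_congr rfl fun u _ =>
    card_pebs_add_outdeg hH u, Finset.sum_const, smul_eq_mul, mul_comm]

theorem countP_fst_mem_le_card_spanned (H : PGConfig V k) {R : Finset V}
    (hR : ∀ a b, H.Arc a b → a ∈ R → b ∈ R) :
    H.edges.countP (fun e => e.1 ∈ R) ≤ (spanned (undirected H) R).card := by
  have hclosed : ∀ e ∈ H.edges.filter (fun e => e.1 ∈ R), s(e.1, e.2.1) ∈ R.sym2 := by
    intro e he
    rw [Multiset.mem_filter] at he
    exact Finset.mk_mem_sym2_iff.2 ⟨he.2, hR _ _ ⟨e.2.2, he.1⟩ he.2⟩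
  calc H.edges.countP (fun e => e.1 ∈ R)
      = ((H.edges.filter fun e => e.1 ∈ R).filter fun e => s(e.1, e.2.1) ∈ R.sym2).card := by
        rw [Multiset.filter_eq_self.2 hclosed, Multiset.countP_eq_card_filter]
    _ ≤ (H.edges.filter fun e => s(e.1, e.2.1) ∈ R.sym2).card :=
        Multiset.card_le_card (Multiset.filter_le_filter _ (Multiset.filter_le _ _))
    _ = (spanned (undirected H) R).card := by
        rw [spanned, undirected, Multiset.filter_map, Multiset.card_map]
        rfl

theorem le_sum_card_pebs_of_sparse [Fintype V] {H : PGConfig V k} (hH : Reachable k ℓ H)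
    {v w : V} (hsparse : Sparse k ℓ (s(v, w) ::ₘ undirected H)) {R : Finset V}
    (hv : v ∈ R) (hw : w ∈ R) (hR : ∀ a b, H.Arc a b → a ∈ R → b ∈ R) :
    ℓ + 1 ≤ ∑ u ∈ R, (H.pebs u).card := by
  have hspan := hsparse R ⟨v, hv⟩
  rw [spanned_cons_of_mem (Finset.mk_mem_sym2_iff.2 ⟨hv, hw⟩), Multiset.card_cons] at hspan
  have := sum_card_pebs_add_countP hH R
  have := countP_fst_mem_le_card_spanned H hR
  omega

def GainsPebbleOn (S : Finset V) (H H' : PGConfig V k) : Prop :=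
  Relation.ReflTransGen (SlideRel k) H H' ∧ (∀ u ∈ S, H.pebs u ≤ H'.pebs u) ∧
    ∑ u ∈ S, (H'.pebs u).card = (∑ u ∈ S, (H.pebs u).card) + 1

theorem gainsPebbleOn_slideCfg {S : Finset V} {H : PGConfig V k} {x u : V} {c c' : Fin k}
    (he : (x, u, c) ∈ H.edges) (hc' : c' ∈ H.pebs u) (hx : x ∈ S) (hu : u ∉ S) :
    GainsPebbleOn S H (slideCfg H x u c c') := by
  have hxu : x ≠ u := ne_of_mem_of_not_mem hx hu
  have hrest : ∀ z ∈ S, z ≠ x → (slideCfg H x u c c').pebs z = H.pebs z := fun z hz hzx =>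
    slideCfg_pebs_of_ne H c c' hzx (ne_of_mem_of_not_mem hz hu)
  refine ⟨.single ⟨x, u, c, c', he, hc', rfl⟩, fun z hz => ?_, ?_⟩
  · by_cases hzx : z = x
    · rw [hzx, slideCfg_pebs_tail H c c' hxu]
      exact Multiset.le_cons_self _ _
    · rw [hrest z hz hzx]
  · rw [← Finset.add_sum_erase S _ hx, ← Finset.add_sum_erase S _ hx,
      slideCfg_pebs_tail H c c' hxu, Multiset.card_cons,
      Finset.sum_congr rfl fun z hz => by
        rw [hrest z (Finset.mem_of_mem_erase hz) (Finset.ne_of_mem_erase hz)]]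
    omega

theorem GainsPebbleOn.slideRel_head {S : Finset V} {H H₁ H' : PGConfig V k}
    (h : GainsPebbleOn S H₁ H') (hslide : SlideRel k H H₁)
    (hS : ∀ u ∈ S, H₁.pebs u = H.pebs u) : GainsPebbleOn S H H' := by
  obtain ⟨hslides, hle, hsum⟩ := h
  refine ⟨.head hslide hslides, fun u hu => hS u hu ▸ hle u hu, ?_⟩
  rw [hsum, Finset.sum_congr rfl fun u hu => by rw [hS u hu]]

theorem arc_slideCfg_of_ne {H : PGConfig V k} {x u a b : V} (c c' : Fin k) (hab : H.Arc a b)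
    (hb : b ≠ u) : (slideCfg H x u c c').Arc a b := by
  obtain ⟨d, hd⟩ := hab
  refine ⟨d, Multiset.mem_cons_of_mem ((Multiset.mem_erase_of_ne ?_).2 hd)⟩
  rintro ⟨⟩
  exact hb rfl

/-- Induction on the length of a path from `S` to a pebble outside `S`: sliding along its
last edge moves the pebble one step closer, and if the shorter path used that edge then
it already visited the pebble's vertex. -/
theorem exists_gainsPebbleOn_of_reachIn {S : Finset V} {n : ℕ} {H : PGConfig V k} {u : V}
    (hreach : ReachIn H.Arc (↑S) n u) (hu : u ∉ S) (hpeb : H.pebs u ≠ 0) :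
    ∃ H', GainsPebbleOn S H H' := by
  induction n using Nat.strong_induction_on generalizing H u with
  | _ n ih =>
    cases hreach with
    | base h => exact absurd h hu
    | @step m a _ ha harc =>
      obtain ⟨c, hc⟩ := harc
      obtain ⟨c', hc'⟩ := Multiset.exists_mem_of_ne_zero hpeb
      by_cases haS : a ∈ S
      · exact ⟨_, gainsPebbleOn_slideCfg hc hc' haS hu⟩
      by_cases hau : a = u
      · subst hau
        exact ih m (by omega) ha hu hpeb
      rcases ha.exists_le_or_reachIn u (r' := (slideCfg H a u c c').Arc)
          (fun _ _ h hb => arc_slideCfg_of_ne c c' h hb) with ⟨m', hm', hu'⟩ | ha'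
      · exact ih m' (by omega) hu' hu hpeb
      · have hpeb' : (slideCfg H a u c c').pebs a ≠ 0 := by
          rw [slideCfg_pebs_tail H c c' hau]
          exact Multiset.cons_ne_zero
        obtain ⟨H', hH'⟩ := ih m (by omega) ha' haS hpeb'
        exact ⟨H', hH'.slideRel_head ⟨a, u, c, c', hc, hc', rfl⟩ fun z hz =>
          slideCfg_pebs_of_ne H c c' (ne_of_mem_of_not_mem hz haS) (ne_of_mem_of_not_mem hz hu)⟩

end Config

end PebbleGame

theorem ell_plus_one_pebble_condition_general {V : Type} [Fintype V] [DecidableEq V]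
    (k ℓ : ℕ) (H : PGConfig V k)
    (hH : Reachable k ℓ H) (v w : V)
    (hsparse : Sparse k ℓ (s(v, w) ::ₘ undirected H))
    (hfew : ∑ u ∈ ({v, w} : Finset V), (H.pebs u).card < ℓ + 1) :
    ∃ H' : PGConfig V k,
      Relation.ReflTransGen (SlideRel k) H H' ∧
      (∀ u ∈ ({v, w} : Finset V), H.pebs u ≤ H'.pebs u) ∧
      ∑ u ∈ ({v, w} : Finset V), (H'.pebs u).card =
        (∑ u ∈ ({v, w} : Finset V), (H.pebs u).card) + 1 := by
  set S : Finset V := {v, w}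
  set R : Finset V := Finset.univ.filter fun u => ∃ n, ReachIn H.Arc (↑S) n u
  have hSR : S ⊆ R := fun u hu => Finset.mem_filter.2 ⟨Finset.mem_univ u, 0, .base hu⟩
  have hR : ∀ a b, H.Arc a b → a ∈ R → b ∈ R := by
    intro a b hab ha
    obtain ⟨n, hn⟩ := (Finset.mem_filter.1 ha).2
    exact Finset.mem_filter.2 ⟨Finset.mem_univ b, n + 1, .step hn hab⟩
  have hpebR := le_sum_card_pebs_of_sparse hH hsparse (hSR (by simp [S])) (hSR (by simp [S])) hR
  obtain ⟨u, huRS, hpeb⟩ : ∃ u ∈ R \ S, (H.pebs u).card ≠ 0 := by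
    refine Finset.exists_ne_zero_of_sum_ne_zero ?_
    have := Finset.sum_sdiff (f := fun u => (H.pebs u).card) hSR
    omega
  obtain ⟨huR, huS⟩ := Finset.mem_sdiff.1 huRS
  obtain ⟨n, hn⟩ := (Finset.mem_filter.1 huR).2
  exact exists_gainsPebbleOn_of_reachIn hn huS (mt Multiset.card_eq_zero.2 hpeb)

/-- the `ℓ+1` pebble condition: if adding an edge `vw` to the
underlying graph of a reachable configuration keeps it `(k,ℓ)`-sparse, and `{v,w}`
holds fewer than `ℓ+1` pebbles, then by pebble-slide moves a further pebble can be
brought to `{v,w}` without removing any pebble already there. -/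
theorem ell_plus_one_pebble_condition {V : Type} [Fintype V] [DecidableEq V]
    (k ℓ : ℕ) (hk : 1 ≤ k) (hℓ : ℓ ≤ 2 * k - 1) (H : PGConfig V k)
    (hH : Reachable k ℓ H) (v w : V)
    (hsparse : Sparse k ℓ (s(v, w) ::ₘ undirected H))
    (hfew : ∑ u ∈ ({v, w} : Finset V), (H.pebs u).card < ℓ + 1) :
    ∃ H' : PGConfig V k,
      Relation.ReflTransGen (SlideRel k) H H' ∧
      (∀ u ∈ ({v, w} : Finset V), H.pebs u ≤ H'.pebs u) ∧
      ∑ u ∈ ({v, w} : Finset V), (H'.pebs u).card =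
        (∑ u ∈ ({v, w} : Finset V), (H.pebs u).card) + 1 :=
  ell_plus_one_pebble_condition_general k ℓ H hH v w hsparse hfew
end
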